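/- Let A ∈ ℝ^{m×k} with ‖AᵀA - m·I‖₂ ≤ (1-c)·m for some c ∈ (0,1], and let v ∈ ℝ^k, ξ ∈ ℝ^m be such that ‖Av - ξ‖₂² ≤ R². Then c·m·‖v‖₂² - 2‖Aᵀξ‖₂·‖v‖₂ ≤ R² - ‖ξ‖₂², and consequently ‖v‖₂ ≤ (‖Aᵀξ‖₂ + √(‖Aᵀξ‖₂² + c·m·(R² - ‖ξ‖₂²)₊))/(c·m). -/
import Mathlib


/-- Quadratic inequality argument for noisy common-feature recovery: if
`‖AᵀA - mI‖₂ ≤ (1-c)m` (expressed via the quadratic form) and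
`‖Av - ξ‖₂² ≤ R²`, then
`cm‖v‖₂² - 2‖Aᵀξ‖₂‖v‖₂ ≤ R² - ‖ξ‖₂²`, which implies
`‖v‖₂ ≤ (‖Aᵀξ‖₂ + √(‖Aᵀξ‖₂² + cm(R² - ‖ξ‖₂²)₊))/(cm)`. -/
theorem stmt_17 (m k : ℕ) (hm : 0 < m) (A : Matrix (Fin m) (Fin k) ℝ)
    (c : ℝ) (hc0 : 0 < c) (hc1 : c ≤ 1)
    (hA : ∀ w : Fin k → ℝ,
      |(∑ i, (A.mulVec w i) ^ 2) - (m : ℝ) * ∑ j, (w j) ^ 2|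
        ≤ (1 - c) * m * ∑ j, (w j) ^ 2)
    (v : Fin k → ℝ) (ξ : Fin m → ℝ) (R : ℝ)
    (hR : ∑ i, (A.mulVec v i - ξ i) ^ 2 ≤ R ^ 2) :
    c * m * (∑ j, (v j) ^ 2)
        - 2 * Real.sqrt (∑ j, (∑ i, A i j * ξ i) ^ 2) * Real.sqrt (∑ j, (v j) ^ 2)
      ≤ R ^ 2 - ∑ i, (ξ i) ^ 2 ∧
    Real.sqrt (∑ j, (v j) ^ 2)
      ≤ (Real.sqrt (∑ j, (∑ i, A i j * ξ i) ^ 2)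
          + Real.sqrt ((∑ j, (∑ i, A i j * ξ i) ^ 2)
              + c * m * max (R ^ 2 - ∑ i, (ξ i) ^ 2) 0)) / (c * m) := by
  set S : ℝ := ∑ j, (v j) ^ 2 with hS
  set B : ℝ := ∑ j, (∑ i, A i j * ξ i) ^ 2 with hB
  set u : ℝ := Real.sqrt S with hu
  set b : ℝ := Real.sqrt B with hb
  have hSnn : 0 ≤ S := Finset.sum_nonneg fun j _ => sq_nonneg _
  have hBnn : 0 ≤ B := Finset.sum_nonneg fun j _ => sq_nonneg _
  have hu2 : u ^ 2 = S := Real.sq_sqrt hSnn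
  have hb2 : b ^ 2 = B := Real.sq_sqrt hBnn
  have hunn : 0 ≤ u := Real.sqrt_nonneg _
  have hbnn : 0 ≤ b := Real.sqrt_nonneg _
  have ha : (0:ℝ) < c * m := by positivity
  -- expand
  have hexp : ∑ i, (A.mulVec v i - ξ i) ^ 2
      = (∑ i, (A.mulVec v i) ^ 2) - 2 * (∑ i, A.mulVec v i * ξ i) + ∑ i, (ξ i) ^ 2 := by
    have h : ∀ i, (A.mulVec v i - ξ i) ^ 2
        = A.mulVec v i ^ 2 - 2 * (A.mulVec v i * ξ i) + ξ i ^ 2 := fun i => by ring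
    simp_rw [h, Finset.sum_add_distrib, Finset.sum_sub_distrib, ← Finset.mul_sum]
  -- quadratic form lower bound
  have hlow : c * m * S ≤ ∑ i, (A.mulVec v i) ^ 2 := by
    have := hA v
    have h1 := abs_le.mp this
    nlinarith [h1.1]
  -- swap sums
  have hswap : (∑ i, A.mulVec v i * ξ i) = ∑ j, v j * (∑ i, A i j * ξ i) := by
    simp only [Matrix.mulVec, dotProduct, Finset.sum_mul, Finset.mul_sum]
    rw [Finset.sum_comm]
    congr 1; funext i; congr 1; funext j; ring
  -- Cauchy-Schwarz
  have hcs : (∑ i, A.mulVec v i * ξ i) ≤ b * u := by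
    rw [hswap]
    have hsq : (∑ j, v j * (∑ i, A i j * ξ i)) ^ 2 ≤ S * B := by
      exact Finset.sum_mul_sq_le_sq_mul_sq Finset.univ (fun j => v j)
        (fun j => ∑ i, A i j * ξ i)
    calc (∑ j, v j * (∑ i, A i j * ξ i)) ≤ |∑ j, v j * (∑ i, A i j * ξ i)| := le_abs_self _
      _ = Real.sqrt ((∑ j, v j * (∑ i, A i j * ξ i)) ^ 2) := (Real.sqrt_sq_eq_abs _).symm
      _ ≤ Real.sqrt (S * B) := Real.sqrt_le_sqrt hsq
      _ = b * u := by rw [Real.sqrt_mul hSnn, hu, hb, mul_comm]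
  have key : c * m * S - 2 * b * u ≤ R ^ 2 - ∑ i, (ξ i) ^ 2 := by
    rw [hexp] at hR; nlinarith
  refine ⟨key, ?_⟩
  -- second part
  set D : ℝ := max (R ^ 2 - ∑ i, (ξ i) ^ 2) 0 with hD
  have hDnn : 0 ≤ D := le_max_right _ _
  have hq : c * m * u ^ 2 - 2 * b * u ≤ D := by
    rw [hu2]; exact key.trans (le_max_left _ _)
  have hsq : (c * m * u - b) ^ 2 ≤ B + c * m * D := by nlinarith
  have h2 : c * m * u - b ≤ Real.sqrt (B + c * m * D) := by
    calc c * m * u - b ≤ |c * m * u - b| := le_abs_self _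
      _ = Real.sqrt ((c * m * u - b) ^ 2) := (Real.sqrt_sq_eq_abs _).symm
      _ ≤ Real.sqrt (B + c * m * D) := Real.sqrt_le_sqrt hsq
  rw [le_div_iff₀ ha]
  linarith
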